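/- arXiv:math/0610602 — 2 statements merged into one kernel-verified Lean document; each statement's English description precedes it below -/
import Mathlib

section
/- Under the hypotheses of the Matrix Perturbation Lemma, the perturbed products admit strongly contracted directions: For every κ ∈ (0, 5] there exists b₀ ∈ (0, κ) such that for every b ∈ (0, b₀) there exists λ with b < λ < min(1, κ) with the following property. Let n ≥ 1, let v ∈ ℝ² be a unit vector, and let A₁, …, Aₙ and A₁′, …, Aₙ′ be 2×2 real matrices with det Aᵢ = b, det Aᵢ′ = b, ‖Aᵢ‖ ≤ 5 and ‖Aᵢ′‖ ≤ 5 for all 1 ≤ i ≤ n. If ‖Aⁱ v‖ ≥ κⁱ and ‖Aᵢ − Aᵢ′‖ < λⁱ for all 1 ≤ i ≤ n, then for every 1 ≤ i ≤ n there exists a unit vector eᵢ ∈ ℝ² with ‖A′ⁱ eᵢ‖ ≤ 2 (b/κ)ⁱ. -/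
/-!
Write `Wⱼ = Aʲ v` and `W'ⱼ = A'ʲ v`. Since `det Aⱼ = b`, the area `ω(Wⱼ, W'ⱼ)` is multiplied by `b`
at each step, up to an error `‖Wⱼ₊₁‖ ‖A'ⱼ₊₁ - Aⱼ₊₁‖ ‖W'ⱼ‖ ≤ 10 b (50 b)ʲ`; hence it stays of order
`b (κ² / 2)ʲ`. Splitting `W'ⱼ - Wⱼ` along `Wⱼ` and its normal, the normal part has size
`|ω(Wⱼ, W'ⱼ)| / ‖Wⱼ‖`, which is negligible against the growth `‖Wⱼ‖ ≥ κʲ`; so the relative error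
`‖W'ⱼ - Wⱼ‖ / ‖Wⱼ‖` grows by the terms of a geometric series and stays below `1 / 2`, giving
`‖A'ⁱ v‖ ≥ κⁱ / 2`. A unit vector `e` with `A'ⁱ e ⊥ A'ⁱ v` then satisfies
`‖A'ⁱ e‖ ‖A'ⁱ v‖ = |ω(A'ⁱ e, A'ⁱ v)| ≤ bⁱ`. This works with `b₀ = κ³ / 1000` and `λ = 2 b`.
-/

noncomputable section

/-- The Euclidean plane. -/
abbrev E2 := EuclideanSpace ℝ (Fin 2)

/-- Given a sequence of linear maps `A₁, A₂, …` on the plane, `matProd A i = Aᵢ ⋯ A₂ A₁`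
(with `matProd A 0 = id`). -/
def matProd (A : ℕ → (E2 →L[ℝ] E2)) : ℕ → (E2 →L[ℝ] E2)
  | 0 => ContinuousLinearMap.id ℝ E2
  | (i + 1) => (A (i + 1)).comp (matProd A i)

open scoped RealInnerProductSpace

namespace Orientation

variable {E : Type*} [NormedAddCommGroup E] [InnerProductSpace ℝ E]
  [Fact (Module.finrank ℝ E = 2)] (o : Orientation ℝ E (Fin 2))

local notation "ω" => o.areaForm
local notation "J" => o.rightAngleRotation

theorem areaForm_comp_linearMap (f : E →ₗ[ℝ] E) (x y : E) :
    ω (f x) (f y) = LinearMap.det f * ω x y := by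
  have hb := o.finOrthonormalBasis_orientation two_pos Fact.out
  rw [areaForm_to_volumeForm, areaForm_to_volumeForm, o.volumeForm_robust _ hb,
    ← Module.Basis.det_comp]
  congr 1
  ext i
  fin_cases i <;> rfl

theorem norm_sq_smul_eq_inner_smul_add_areaForm_smul (a x : E) :
    ‖a‖ ^ 2 • x = ⟪a, x⟫ • a + ω a x • J a := by
  refine ext_inner_right ℝ fun y => ?_
  simp only [inner_add_left, real_inner_smul_left, inner_rightAngleRotation_left]
  linarith [o.inner_mul_inner_add_areaForm_mul_areaForm a x y]

theorem norm_mul_norm_apply_le (A : E →L[ℝ] E) (w x : E) :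
    ‖w‖ * ‖A x‖ ≤ ‖x‖ * ‖A w‖ + ‖A‖ * |ω w x| := by
  rcases eq_or_ne w 0 with rfl | hw
  · simp only [norm_zero, zero_mul, map_zero, LinearMap.zero_apply]
    positivity
  refine le_of_mul_le_mul_left ?_ (norm_pos_iff.2 hw)
  calc ‖w‖ * (‖w‖ * ‖A x‖) = ‖A (‖w‖ ^ 2 • x)‖ := by
        rw [map_smul, norm_smul, norm_pow, norm_norm]; ring
    _ = ‖⟪w, x⟫ • A w + ω w x • A (J w)‖ := by
        rw [o.norm_sq_smul_eq_inner_smul_add_areaForm_smul, map_add, map_smul, map_smul]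
    _ ≤ |⟪w, x⟫| * ‖A w‖ + |ω w x| * (‖A‖ * ‖w‖) := by
        refine norm_add_le_of_le (by rw [norm_smul, Real.norm_eq_abs]) ?_
        rw [norm_smul, Real.norm_eq_abs]
        gcongr
        simpa using A.le_opNorm (J w)
    _ ≤ ‖w‖ * ‖x‖ * ‖A w‖ + |ω w x| * (‖A‖ * ‖w‖) := by
        gcongr
        exact abs_real_inner_le_norm w x
    _ = ‖w‖ * (‖x‖ * ‖A w‖ + ‖A‖ * |ω w x|) := by ring

end Orientation

theorem exists_norm_eq_one_norm_apply_mul_norm_apply_le {E : Type*} [NormedAddCommGroup E]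
    [InnerProductSpace ℝ E] [Fact (Module.finrank ℝ E = 2)] (A : E →L[ℝ] E) {v : E}
    (hv : ‖v‖ = 1) : ∃ e : E, ‖e‖ = 1 ∧ ‖A e‖ * ‖A v‖ ≤ |LinearMap.det (A : E →ₗ[ℝ] E)| := by
  have : FiniteDimensional ℝ E := .of_fact_finrank_eq_two
  obtain ⟨u, hu⟩ : ∃ u : E, ∀ x, ⟪A x, A v⟫ = ⟪x, u⟫ :=
    ⟨_, fun x => (ContinuousLinearMap.adjoint_inner_right A x (A v)).symm⟩
  rcases eq_or_ne u 0 with rfl | hu0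
  · have hAv : A v = 0 := by rw [← inner_self_eq_zero (𝕜 := ℝ), hu, inner_zero_right]
    exact ⟨v, hv, by simp [hAv]⟩
  let o : Orientation ℝ E (Fin 2) := (Module.finBasisOfFinrankEq ℝ E Fact.out).orientation
  set e := ‖u‖⁻¹ • o.rightAngleRotation u
  have he : ‖e‖ = 1 := by
    rw [norm_smul, LinearIsometryEquiv.norm_map, norm_inv, norm_norm,
      inv_mul_cancel₀ (norm_ne_zero_iff.2 hu0)]
  have horth : ⟪A e, A v⟫ = 0 := by
    rw [hu, real_inner_smul_left, o.inner_rightAngleRotation_self, mul_zero]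
  have hω : o.areaForm (A e) (A v) = LinearMap.det (A : E →ₗ[ℝ] E) * o.areaForm e v :=
    o.areaForm_comp_linearMap A e v
  refine ⟨e, he, ?_⟩
  rw [← o.abs_areaForm_of_orthogonal horth, hω, abs_mul]
  calc _ ≤ |LinearMap.det (A : E →ₗ[ℝ] E)| * (‖e‖ * ‖v‖) := by
        gcongr; exact o.abs_areaForm_le e v
    _ = _ := by rw [he, hv, mul_one, mul_one]

instance : Fact (Module.finrank ℝ E2 = 2) := ⟨finrank_euclideanSpace_fin⟩

theorem matProd_succ_apply_eq_add (A A' : ℕ → (E2 →L[ℝ] E2)) (j : ℕ) (x : E2) :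
    matProd A' (j + 1) x =
      A (j + 1) (matProd A' j x) + (A' (j + 1) - A (j + 1)) (matProd A' j x) := by
  simp [matProd]

section MatProd

variable {A : ℕ → (E2 →L[ℝ] E2)} {n : ℕ}

theorem det_matProd {b : ℝ} (hdet : ∀ i, 1 ≤ i → i ≤ n → LinearMap.det (A i : E2 →ₗ[ℝ] E2) = b)
    {j : ℕ} (hj : j ≤ n) : LinearMap.det (matProd A j : E2 →ₗ[ℝ] E2) = b ^ j := by
  induction j with
  | zero => simp [matProd]
  | succ j ih =>
    rw [matProd, ContinuousLinearMap.toLinearMap_comp, LinearMap.det_comp,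
      hdet (j + 1) (by omega) hj, ih (by omega), pow_succ']

theorem norm_matProd_le {M : ℝ} (hA : ∀ i, 1 ≤ i → i ≤ n → ‖A i‖ ≤ M) {j : ℕ} (hj : j ≤ n) :
    ‖matProd A j‖ ≤ M ^ j := by
  induction j with
  | zero => exact ContinuousLinearMap.norm_id_le
  | succ j ih =>
    have hAj := hA (j + 1) (by omega) hj
    rw [matProd, pow_succ']
    exact (ContinuousLinearMap.opNorm_comp_le _ _).trans
      (mul_le_mul hAj (ih (by omega)) (norm_nonneg _) ((norm_nonneg _).trans hAj))

theorem norm_matProd_apply_le {M : ℝ} {v : E2} (hv : ‖v‖ = 1)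
    (hA : ∀ i, 1 ≤ i → i ≤ n → ‖A i‖ ≤ M) {j : ℕ} (hj : j ≤ n) : ‖matProd A j v‖ ≤ M ^ j := by
  simpa [hv] using (matProd A j).le_of_opNorm_le (norm_matProd_le hA hj) v

theorem pow_le_norm_matProd_apply {κ : ℝ} {v : E2} (hv : ‖v‖ = 1)
    (hgrowth : ∀ i, 1 ≤ i → i ≤ n → κ ^ i ≤ ‖matProd A i v‖) {j : ℕ} (hj : j ≤ n) :
    κ ^ j ≤ ‖matProd A j v‖ := by
  rcases Nat.eq_zero_or_pos j with rfl | hj0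
  · simp [matProd, hv]
  · exact hgrowth j hj0 hj

end MatProd

section Perturbation

variable {κ b : ℝ} {n : ℕ} {v : E2} {A A' : ℕ → (E2 →L[ℝ] E2)}

theorem norm_sub_apply_matProd_le (hv : ‖v‖ = 1) (hA' : ∀ i, 1 ≤ i → i ≤ n → ‖A' i‖ ≤ 5)
    (hclose : ∀ i, 1 ≤ i → i ≤ n → ‖A i - A' i‖ ≤ (2 * b) ^ i) {j : ℕ} (hj : j + 1 ≤ n) :
    ‖(A' (j + 1) - A (j + 1)) (matProd A' j v)‖ ≤ (2 * b) ^ (j + 1) * 5 ^ j := by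
  have hclose' : ‖A' (j + 1) - A (j + 1)‖ ≤ (2 * b) ^ (j + 1) := by
    rw [norm_sub_rev]
    exact hclose (j + 1) (by omega) hj
  exact (ContinuousLinearMap.le_opNorm _ _).trans (mul_le_mul hclose'
    (norm_matProd_apply_le hv hA' (by omega)) (norm_nonneg _) ((norm_nonneg _).trans hclose'))

theorem abs_areaForm_matProd_le (o : Orientation ℝ E2 (Fin 2)) (hκ : 0 < κ) (hb : 0 ≤ b)
    (hbκ : 100 * b ≤ κ ^ 2) (hv : ‖v‖ = 1)
    (hdet : ∀ i, 1 ≤ i → i ≤ n → LinearMap.det (A i : E2 →ₗ[ℝ] E2) = b)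
    (hA : ∀ i, 1 ≤ i → i ≤ n → ‖A i‖ ≤ 5) (hA' : ∀ i, 1 ≤ i → i ≤ n → ‖A' i‖ ≤ 5)
    (hclose : ∀ i, 1 ≤ i → i ≤ n → ‖A i - A' i‖ ≤ (2 * b) ^ i) {j : ℕ} (hj : j ≤ n) :
    |o.areaForm (matProd A j v) (matProd A' j v)| ≤ 40 * b / κ ^ 2 * (κ ^ 2 / 2) ^ j := by
  induction j with
  | zero =>
    simp only [matProd, ContinuousLinearMap.id_apply, o.areaForm_apply_self, abs_zero]
    positivity
  | succ j ih =>
    set ζ := (A' (j + 1) - A (j + 1)) (matProd A' j v)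
    have hstep : o.areaForm (matProd A (j + 1) v) (matProd A' (j + 1) v) =
        b * o.areaForm (matProd A j v) (matProd A' j v) + o.areaForm (matProd A (j + 1) v) ζ := by
      rw [matProd_succ_apply_eq_add A A', map_add]
      congr 1
      rw [← hdet (j + 1) (by omega) hj, ← o.areaForm_comp_linearMap]
      rfl
    have hpow : (50 * b) ^ j ≤ (κ ^ 2 / 2) ^ j := by gcongr; linarith
    calc _ ≤ b * |o.areaForm (matProd A j v) (matProd A' j v)| + ‖matProd A (j + 1) v‖ * ‖ζ‖ := by
          rw [hstep]
          refine (abs_add_le _ _).trans (add_le_add ?_ (o.abs_areaForm_le _ _))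
          rw [abs_mul, abs_of_nonneg hb]
      _ ≤ b * (40 * b / κ ^ 2 * (κ ^ 2 / 2) ^ j) + 5 ^ (j + 1) * ((2 * b) ^ (j + 1) * 5 ^ j) := by
          gcongr
          · exact ih (by omega)
          · exact norm_matProd_apply_le hv hA hj
          · exact norm_sub_apply_matProd_le hv hA' hclose hj
      _ = 40 * b ^ 2 / κ ^ 2 * (κ ^ 2 / 2) ^ j + 10 * b * (50 * b) ^ j := by
          have h50 : (50 * b) ^ j = 5 ^ j * (2 * b) ^ j * 5 ^ j := by
            rw [← mul_pow, ← mul_pow]; ring_nf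
          rw [h50]
          ring
      _ ≤ 10 * b * (κ ^ 2 / 2) ^ j + 10 * b * (κ ^ 2 / 2) ^ j := by
          gcongr
          rw [div_le_iff₀ (by positivity)]
          nlinarith
      _ = 40 * b / κ ^ 2 * (κ ^ 2 / 2) ^ (j + 1) := by field_simp; ring

theorem norm_mul_norm_matProd_sub_succ_le (o : Orientation ℝ E2 (Fin 2)) (hv : ‖v‖ = 1)
    (hA : ∀ i, 1 ≤ i → i ≤ n → ‖A i‖ ≤ 5) (hA' : ∀ i, 1 ≤ i → i ≤ n → ‖A' i‖ ≤ 5)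
    (hclose : ∀ i, 1 ≤ i → i ≤ n → ‖A i - A' i‖ ≤ (2 * b) ^ i) {j : ℕ} (hj : j + 1 ≤ n) :
    ‖matProd A j v‖ * ‖matProd A' (j + 1) v - matProd A (j + 1) v‖ ≤
      ‖matProd A' j v - matProd A j v‖ * ‖matProd A (j + 1) v‖ +
        5 * |o.areaForm (matProd A j v) (matProd A' j v)| +
        5 ^ j * ((2 * b) ^ (j + 1) * 5 ^ j) := by
  set W := matProd A j v
  set δ := matProd A' j v - W
  set ζ := (A' (j + 1) - A (j + 1)) (matProd A' j v)
  have hδ : matProd A' (j + 1) v - matProd A (j + 1) v = A (j + 1) δ + ζ := by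
    change _ - A (j + 1) W = _
    rw [matProd_succ_apply_eq_add A A', map_sub]
    abel
  have hωδ : o.areaForm W δ = o.areaForm W (matProd A' j v) := by
    rw [map_sub, o.areaForm_apply_self, sub_zero]
  calc _ ≤ ‖W‖ * ‖A (j + 1) δ‖ + ‖W‖ * ‖ζ‖ := by
        rw [hδ, ← mul_add]; gcongr; exact norm_add_le _ _
    _ ≤ ‖δ‖ * ‖matProd A (j + 1) v‖ + 5 * |o.areaForm W δ| + ‖W‖ * ‖ζ‖ := by
        gcongr
        refine (o.norm_mul_norm_apply_le _ W δ).trans (add_le_add le_rfl ?_)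
        gcongr
        exact hA (j + 1) (by omega) hj
    _ ≤ _ := by
        rw [hωδ]
        gcongr
        · exact norm_matProd_apply_le hv hA (by omega)
        · exact norm_sub_apply_matProd_le hv hA' hclose hj

theorem norm_matProd_sub_matProd_le (hκ : 0 < κ) (hκ5 : κ ≤ 5) (hb : 0 ≤ b)
    (hbκ : 1000 * b ≤ κ ^ 3) (hv : ‖v‖ = 1)
    (hdet : ∀ i, 1 ≤ i → i ≤ n → LinearMap.det (A i : E2 →ₗ[ℝ] E2) = b)
    (hA : ∀ i, 1 ≤ i → i ≤ n → ‖A i‖ ≤ 5) (hA' : ∀ i, 1 ≤ i → i ≤ n → ‖A' i‖ ≤ 5)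
    (hclose : ∀ i, 1 ≤ i → i ≤ n → ‖A i - A' i‖ ≤ (2 * b) ^ i)
    (hgrowth : ∀ i, 1 ≤ i → i ≤ n → κ ^ i ≤ ‖matProd A i v‖) {j : ℕ} (hj : j ≤ n) :
    ‖matProd A' j v - matProd A j v‖ ≤ (1 - (1 / 2) ^ j) / 2 * ‖matProd A j v‖ := by
  obtain ⟨o⟩ : Nonempty (Orientation ℝ E2 (Fin 2)) :=
    ⟨(EuclideanSpace.basisFun (Fin 2) ℝ).toBasis.orientation⟩
  induction j with
  | zero => simp [matProd]
  | succ j ih =>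
    have hW := pow_le_norm_matProd_apply hv hgrowth (j := j) (by omega)
    have hW₁ := pow_le_norm_matProd_apply hv hgrowth hj
    have hcross := abs_areaForm_matProd_le o hκ hb (by nlinarith) hv hdet hA hA' hclose
      (j := j) (by omega)
    have herror : 5 * (40 * b / κ ^ 2 * (κ ^ 2 / 2) ^ j) + 5 ^ j * ((2 * b) ^ (j + 1) * 5 ^ j) ≤
        (1 / 2) ^ j / 4 * (κ ^ j * κ ^ (j + 1)) := by
      have h50 : (50 * b) ^ j = 5 ^ j * (2 * b) ^ j * 5 ^ j := by
        rw [← mul_pow, ← mul_pow]; ring_nf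
      have hpow : (50 * b) ^ j ≤ (κ ^ 2 / 2) ^ j := by gcongr; nlinarith
      have hsmall : 200 * b / κ ^ 2 + 2 * b ≤ κ / 4 := by
        have : 200 * b / κ ^ 2 ≤ κ / 5 := by
          rw [div_le_iff₀ (by positivity)]; nlinarith
        nlinarith
      calc _ = (200 * b / κ ^ 2) * (κ ^ 2 / 2) ^ j + 2 * b * (50 * b) ^ j := by rw [h50]; ring
        _ ≤ (200 * b / κ ^ 2 + 2 * b) * (κ ^ 2 / 2) ^ j := by rw [add_mul]; gcongr
        _ ≤ κ / 4 * (κ ^ 2 / 2) ^ j := by gcongr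
        _ = _ := by ring
    refine le_of_mul_le_mul_left ?_ (lt_of_lt_of_le (by positivity) hW)
    calc _ ≤ _ := norm_mul_norm_matProd_sub_succ_le o hv hA hA' hclose hj
      _ ≤ (1 - (1 / 2) ^ j) / 2 * ‖matProd A j v‖ * ‖matProd A (j + 1) v‖ +
            5 * (40 * b / κ ^ 2 * (κ ^ 2 / 2) ^ j) + 5 ^ j * ((2 * b) ^ (j + 1) * 5 ^ j) := by
          gcongr
          exact ih (by omega)
      _ ≤ (1 - (1 / 2) ^ j) / 2 * ‖matProd A j v‖ * ‖matProd A (j + 1) v‖ +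
            (1 / 2) ^ j / 4 * (‖matProd A j v‖ * ‖matProd A (j + 1) v‖) := by
          rw [add_assoc]; gcongr; exact herror.trans (by gcongr)
      _ = _ := by ring

theorem pow_div_two_le_norm_matProd (hκ : 0 < κ) (hκ5 : κ ≤ 5) (hb : 0 ≤ b)
    (hbκ : 1000 * b ≤ κ ^ 3) (hv : ‖v‖ = 1)
    (hdet : ∀ i, 1 ≤ i → i ≤ n → LinearMap.det (A i : E2 →ₗ[ℝ] E2) = b)
    (hA : ∀ i, 1 ≤ i → i ≤ n → ‖A i‖ ≤ 5) (hA' : ∀ i, 1 ≤ i → i ≤ n → ‖A' i‖ ≤ 5)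
    (hclose : ∀ i, 1 ≤ i → i ≤ n → ‖A i - A' i‖ ≤ (2 * b) ^ i)
    (hgrowth : ∀ i, 1 ≤ i → i ≤ n → κ ^ i ≤ ‖matProd A i v‖) {j : ℕ} (hj : j ≤ n) :
    κ ^ j / 2 ≤ ‖matProd A' j v‖ := by
  have hδ := norm_matProd_sub_matProd_le hκ hκ5 hb hbκ hv hdet hA hA' hclose hgrowth hj
  have hW := pow_le_norm_matProd_apply hv hgrowth hj
  have htri := norm_sub_norm_le (matProd A j v) (matProd A' j v)
  rw [norm_sub_rev] at htri
  nlinarith [mul_nonneg (pow_nonneg (by norm_num : (0 : ℝ) ≤ 1 / 2) j)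
    (norm_nonneg (matProd A j v))]

end Perturbation

/-- Under the hypotheses of the Matrix Perturbation Lemma, the perturbed products admit
strongly contracted directions: for every `κ ∈ (0, 5]` there is `b₀ ∈ (0, κ)` such that
for every `b ∈ (0, b₀)` there is `λ` with `b < λ < min 1 κ` such that for all `n ≥ 1`,
every unit vector `v`, and all matrices `A₁, …, Aₙ`, `A₁', …, Aₙ'` of determinant `b`
and norm at most `5`, if `‖Aⁱ v‖ ≥ κⁱ` and `‖Aᵢ - Aᵢ'‖ < λⁱ` for all `1 ≤ i ≤ n`,
then for every `1 ≤ i ≤ n` there is a unit vector `eᵢ` with `‖A'ⁱ eᵢ‖ ≤ 2 (b/κ)ⁱ`. -/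
theorem matrix_perturbation_contracted_direction :
    ∀ κ : ℝ, 0 < κ → κ ≤ 5 →
    ∃ b₀ : ℝ, 0 < b₀ ∧ b₀ < κ ∧
    ∀ b : ℝ, 0 < b → b < b₀ →
    ∃ lam : ℝ, b < lam ∧ lam < min 1 κ ∧
    ∀ n : ℕ, 1 ≤ n → ∀ v : E2, ‖v‖ = 1 →
    ∀ A A' : ℕ → (E2 →L[ℝ] E2),
    (∀ i : ℕ, 1 ≤ i → i ≤ n →
      LinearMap.det (A i : E2 →ₗ[ℝ] E2) = b ∧ LinearMap.det (A' i : E2 →ₗ[ℝ] E2) = b ∧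
      ‖A i‖ ≤ 5 ∧ ‖A' i‖ ≤ 5) →
    (∀ i : ℕ, 1 ≤ i → i ≤ n → κ ^ i ≤ ‖matProd A i v‖ ∧ ‖A i - A' i‖ < lam ^ i) →
    ∀ i : ℕ, 1 ≤ i → i ≤ n →
      ∃ e : E2, ‖e‖ = 1 ∧ ‖matProd A' i e‖ ≤ 2 * (b / κ) ^ i := by
  intro κ hκ hκ5
  have hκ3 : κ ^ 3 ≤ 25 * κ := by nlinarith [pow_le_pow_left₀ hκ.le hκ5 2]
  refine ⟨κ ^ 3 / 1000, by positivity, by nlinarith, fun b hb hbb₀ => ?_⟩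
  refine ⟨2 * b, by linarith, lt_min (by nlinarith) (by nlinarith), ?_⟩
  intro n _ v hv A A' hmat hpert i _ hin
  have hlow : κ ^ i / 2 ≤ ‖matProd A' i v‖ :=
    pow_div_two_le_norm_matProd hκ hκ5 hb.le (by linarith) hv (fun j h₁ h₂ => (hmat j h₁ h₂).1)
      (fun j h₁ h₂ => (hmat j h₁ h₂).2.2.1) (fun j h₁ h₂ => (hmat j h₁ h₂).2.2.2)
      (fun j h₁ h₂ => (hpert j h₁ h₂).2.le) (fun j h₁ h₂ => (hpert j h₁ h₂).1) hin
  obtain ⟨e, he, hAe⟩ := exists_norm_eq_one_norm_apply_mul_norm_apply_le (matProd A' i) hv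
  rw [det_matProd (fun j h₁ h₂ => (hmat j h₁ h₂).2.1) hin, abs_of_pos (pow_pos hb i)] at hAe
  refine ⟨e, he, ?_⟩
  rw [div_pow, ← mul_div_assoc, le_div_iff₀ (pow_pos hκ i)]
  nlinarith [mul_le_mul_of_nonneg_left hlow (norm_nonneg (matProd A' i e))]
end
end

section
/- In the Bowen lifting setup, let ν̃ be the lifted measure, let φ : X → ℝ be a continuous nonnegative function which is constant on every fiber π⁻¹{y}, and let ψ : X → ℝ be continuous. Then for every k ∈ ℕ, |∫ ψ·φ dν̃ − ∫ (ψ ∘ F^k)* · (φ ∘ F^k)* dν̄| ≤ ‖φ‖_∞ · var ψ(k), where ‖φ‖_∞ = sup_{x ∈ X} |φ(x)|. -/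
open MeasureTheory Filter Pointwise

noncomputable section

/-- The discretization of `φ : X → ℝ` along the fibers of `π : X → Y`:
`φ*(y) = inf {φ(x) : π(x) = y}`. -/
def disc {X Y : Type*} (π : X → Y) (φ : X → ℝ) : Y → ℝ :=
  fun y => sInf (φ '' (π ⁻¹' {y}))

/-- The variation of `φ : X → ℝ` at scale `r`:
`sup {|φ(x) - φ(x')| : dist x x' ≤ r}`. -/
def varAt {X : Type*} [MetricSpace X] (φ : X → ℝ) (r : ℝ) : ℝ :=
  sSup {t : ℝ | ∃ x x' : X, dist x x' ≤ r ∧ t = |φ x - φ x'|}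

/-- If `g` is constant on fibers of `π`, its discretization pulls back to `g`. -/
lemma disc_apply_of_const {X Y : Type*} (π : X → Y) (g : X → ℝ)
    (hg : ∀ x x' : X, π x = π x' → g x = g x') (x : X) : disc π g (π x) = g x := by
  unfold disc
  have : g '' (π ⁻¹' {π x}) = {g x} := by
    ext t
    simp only [Set.mem_image, Set.mem_preimage, Set.mem_singleton_iff]
    constructor
    · rintro ⟨x', hx', rfl⟩; exact hg x' x hx'
    · rintro rfl; exact ⟨x, rfl, rfl⟩
  rw [this, csInf_singleton]

/-- A uniform bound on `g` gives the same bound on its discretization. -/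
lemma abs_disc_le {X Y : Type*} (π : X → Y) (hπ : Function.Surjective π)
    (g : X → ℝ) (M : ℝ) (hg : ∀ x, |g x| ≤ M) (y : Y) : |disc π g y| ≤ M := by
  obtain ⟨x0, rfl⟩ := hπ y
  have hne : (g '' (π ⁻¹' {π x0})).Nonempty := ⟨g x0, ⟨x0, rfl, rfl⟩⟩
  have hbdd : ∀ t ∈ g '' (π ⁻¹' {π x0}), -M ≤ t := by
    rintro t ⟨x, _, rfl⟩
    linarith [(abs_le.1 (hg x)).1]
  rw [abs_le]
  refine ⟨le_csInf hne hbdd, ?_⟩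
  exact le_trans (csInf_le ⟨-M, hbdd⟩ ⟨x0, rfl, rfl⟩) (abs_le.1 (hg x0)).2

/-- Bowen lifting setup: if `ν̃` is the lifted measure, `φ` is continuous, nonnegative
and constant on fibers of `π`, and `ψ` is continuous, then for every `k`,
`|∫ ψ·φ dν̃ - ∫ (ψ ∘ F^k)* (φ ∘ F^k)* dν̄| ≤ ‖φ‖_∞ · var ψ(k)`. -/
theorem bowen_lift_product_estimate
    {X Y : Type*} [MetricSpace X] [CompactSpace X]
    [MeasurableSpace X] [BorelSpace X] [MeasurableSpace Y]
    (π : X → Y) (F : X → X) (Fbar : Y → Y) (ν : Measure Y) (C β : ℝ)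
    (hπ : Function.Surjective π) (hF : Continuous F) (hFbar : Measurable Fbar)
    (hcomm : π ∘ F = Fbar ∘ π)
    (hprob : IsProbabilityMeasure ν)
    (hinv : Measure.map Fbar ν = ν)
    (hC : 0 < C) (hβ0 : 0 < β) (hβ1 : β < 1)
    (hdiam : ∀ (y : Y) (k : ℕ), Metric.diam (F^[k] '' (π ⁻¹' {y})) ≤ C * β ^ k)
    (hmeas : ∀ φ : X → ℝ, Continuous φ → ∀ k : ℕ, Measurable (disc π (φ ∘ F^[k])))
    (νt : Measure X) (hνt : IsProbabilityMeasure νt)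
    (hlift : ∀ φ : X → ℝ, Continuous φ →
      Tendsto (fun k : ℕ => ∫ y, disc π (φ ∘ F^[k]) y ∂ν) atTop
        (nhds (∫ x, φ x ∂νt)))
    (φ : X → ℝ) (hφ : Continuous φ) (hφ0 : ∀ x, 0 ≤ φ x)
    (hconst : ∀ x x' : X, π x = π x' → φ x = φ x')
    (ψ : X → ℝ) (hψ : Continuous ψ) (k : ℕ) :
    |(∫ x, ψ x * φ x ∂νt) -
        ∫ y, disc π (ψ ∘ F^[k]) y * disc π (φ ∘ F^[k]) y ∂ν| ≤
      (⨆ x : X, |φ x|) * varAt ψ (C * β ^ k) := by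
  -- nonemptiness
  have hYne : Nonempty Y := by
    by_contra h
    rw [not_nonempty_iff] at h
    have h1 : (Set.univ : Set Y) = ∅ := Set.univ_eq_empty_iff.2 h
    have h2 := hprob.measure_univ
    rw [h1] at h2
    simp at h2
  haveI hXne : Nonempty X := ⟨(hπ (Classical.arbitrary Y)).choose⟩
  -- commutation of iterates
  have hπF : ∀ (n : ℕ) (x : X), π (F^[n] x) = Fbar^[n] (π x) := by
    intro n
    induction n with
    | zero => intro x; simp
    | succ n ih =>
      intro x
      rw [Function.iterate_succ_apply, ih,
        show π (F x) = Fbar (π x) from congrFun hcomm x]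
      exact (Function.iterate_succ_apply Fbar n (π x)).symm
  -- φ ∘ F^[n] is constant on fibers
  have hfc : ∀ (n : ℕ) (x x' : X), π x = π x' → φ (F^[n] x) = φ (F^[n] x') := by
    intro n x x' h
    exact hconst _ _ (by rw [hπF, hπF, h])
  have hdiscφ : ∀ (n : ℕ) (x : X), disc π (φ ∘ F^[n]) (π x) = φ (F^[n] x) :=
    fun n x => disc_apply_of_const π (φ ∘ F^[n]) (hfc n) x
  -- sup bounds
  set M : ℝ := ⨆ x : X, |φ x| with hM
  have bddφ : ∀ z : X, |φ z| ≤ M :=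
    fun z => le_ciSup (IsCompact.bddAbove (isCompact_range hφ.abs)) z
  have hM0 : 0 ≤ M := le_trans (abs_nonneg _) (bddφ (Classical.arbitrary X))
  set Mψ : ℝ := ⨆ x : X, |ψ x| with hMψ
  have bddψ : ∀ z : X, |ψ z| ≤ Mψ :=
    fun z => le_ciSup (IsCompact.bddAbove (isCompact_range hψ.abs)) z
  -- variation
  set V : ℝ := varAt ψ (C * β ^ k) with hVdef
  have hr0 : (0 : ℝ) ≤ C * β ^ k := le_of_lt (mul_pos hC (pow_pos hβ0 k))
  have bddVset : BddAbove {t : ℝ | ∃ x x' : X, dist x x' ≤ C * β ^ k ∧ t = |ψ x - ψ x'|} := by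
    refine ⟨2 * Mψ, ?_⟩
    rintro t ⟨x, x', _, rfl⟩
    calc |ψ x - ψ x'| ≤ |ψ x| + |ψ x'| := abs_sub _ _
      _ ≤ 2 * Mψ := by linarith [bddψ x, bddψ x']
  have hV : ∀ x x' : X, dist x x' ≤ C * β ^ k → |ψ x - ψ x'| ≤ V :=
    fun x x' h => le_csSup bddVset ⟨x, x', h, rfl⟩
  have hV0 : 0 ≤ V := by
    have := hV (Classical.arbitrary X) (Classical.arbitrary X) (by simpa using hr0)
    exact le_trans (abs_nonneg _) this
  -- product discretization
  have hprod : ∀ (n : ℕ) (y : Y),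
      disc π ((fun x => ψ x * φ x) ∘ F^[n]) y
        = disc π (ψ ∘ F^[n]) y * disc π (φ ∘ F^[n]) y := by
    intro n y
    obtain ⟨x0, rfl⟩ := hπ y
    have hcval : ∀ x ∈ π ⁻¹' {π x0}, φ (F^[n] x) = φ (F^[n] x0) := fun x hx => hfc n x x0 hx
    have himg : ((fun x => ψ x * φ x) ∘ F^[n]) '' (π ⁻¹' {π x0})
        = φ (F^[n] x0) • ((ψ ∘ F^[n]) '' (π ⁻¹' {π x0})) := by
      ext t
      simp only [Set.mem_smul_set, Set.mem_image, Function.comp_apply, smul_eq_mul]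
      constructor
      · rintro ⟨x, hx, rfl⟩
        exact ⟨ψ (F^[n] x), ⟨x, hx, rfl⟩, by rw [hcval x hx]; ring⟩
      · rintro ⟨_, ⟨x, hx, rfl⟩, rfl⟩
        exact ⟨x, hx, by rw [hcval x hx]; ring⟩
    have h2 : disc π ((fun x => ψ x * φ x) ∘ F^[n]) (π x0)
        = φ (F^[n] x0) * disc π (ψ ∘ F^[n]) (π x0) := by
      unfold disc
      rw [himg, Real.sInf_smul_of_nonneg (hφ0 _), smul_eq_mul]
    rw [h2, hdiscφ n x0]
    ring
  -- shifting the fiber discretization of φ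
  have hshift : ∀ (m : ℕ) (y : Y),
      disc π (φ ∘ F^[k]) (Fbar^[m] y) = disc π (φ ∘ F^[k + m]) y := by
    intro m y
    obtain ⟨x, rfl⟩ := hπ y
    rw [← hπF m x, hdiscφ k (F^[m] x), hdiscφ (k + m) x,
      Function.iterate_add_apply]
  -- variation estimate for ψ's discretizations
  have hvar : ∀ (m : ℕ) (y : Y),
      |disc π (ψ ∘ F^[k + m]) y - disc π (ψ ∘ F^[k]) (Fbar^[m] y)| ≤ V := by
    intro m y
    obtain ⟨x0, rfl⟩ := hπ y
    set D := F^[k] '' (π ⁻¹' {Fbar^[m] (π x0)}) with hD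
    have hsub : F^[k + m] '' (π ⁻¹' {π x0}) ⊆ D := by
      rintro _ ⟨x, hx, rfl⟩
      refine ⟨F^[m] x, ?_, (Function.iterate_add_apply F k m x).symm⟩
      simp only [Set.mem_preimage, Set.mem_singleton_iff] at hx ⊢
      rw [hπF m x, hx]
    have hdd : ∀ u ∈ D, ∀ v ∈ D, |ψ u - ψ v| ≤ V := by
      intro u hu v hv
      exact hV u v (le_trans (Metric.dist_le_diam_of_mem Metric.isBounded_of_compactSpace hu hv)
        (hdiam _ k))
    set A := (ψ ∘ F^[k + m]) '' (π ⁻¹' {π x0}) with hA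
    set B := (ψ ∘ F^[k]) '' (π ⁻¹' {Fbar^[m] (π x0)}) with hB
    have hu0 : F^[k + m] x0 ∈ D := hsub ⟨x0, rfl, rfl⟩
    have hAne : A.Nonempty := ⟨ψ (F^[k + m] x0), ⟨x0, rfl, rfl⟩⟩
    have hBmem : (F^[m] x0) ∈ π ⁻¹' {Fbar^[m] (π x0)} := by
      simp only [Set.mem_preimage, Set.mem_singleton_iff]
      exact hπF m x0
    have hBne : B.Nonempty := ⟨ψ (F^[k] (F^[m] x0)), ⟨F^[m] x0, hBmem, rfl⟩⟩
    have hBbdd : BddBelow B := by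
      refine ⟨-Mψ, ?_⟩
      rintro _ ⟨z, _, rfl⟩
      simp only [Function.comp_apply]
      linarith [(abs_le.1 (bddψ (F^[k] z))).1]
    have hAbdd : BddBelow A := by
      refine ⟨-Mψ, ?_⟩
      rintro _ ⟨z, _, rfl⟩
      simp only [Function.comp_apply]
      linarith [(abs_le.1 (bddψ (F^[k + m] z))).1]
    have hAB : A ⊆ B := by
      rintro _ ⟨x, hx, rfl⟩
      refine ⟨F^[m] x, ?_, ?_⟩
      · simp only [Set.mem_preimage, Set.mem_singleton_iff] at hx ⊢
        rw [hπF m x, hx]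
      · simp only [Function.comp_apply]
        rw [← Function.iterate_add_apply]
    have claim1 : sInf B ≤ sInf A := csInf_le_csInf hBbdd hAne hAB
    have claim2 : sInf A - V ≤ sInf B := by
      refine le_csInf hBne ?_
      rintro _ ⟨z, hz, rfl⟩
      have hvD : F^[k] z ∈ D := ⟨z, hz, rfl⟩
      have h1 : sInf A ≤ ψ (F^[k + m] x0) := csInf_le hAbdd ⟨x0, rfl, rfl⟩
      have h2 := abs_le.1 (hdd _ hu0 _ hvD)
      simp only [Function.comp_apply]
      linarith [h2.2]
    show |sInf A - sInf B| ≤ V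
    rw [abs_le]
    constructor <;> linarith
  -- integrability helper
  have mkInt : ∀ (g : Y → ℝ) (M' : ℝ), Measurable g → (∀ y, |g y| ≤ M') →
      Integrable g ν := by
    intro g M' hg hb
    exact ⟨hg.aestronglyMeasurable,
      HasFiniteIntegral.of_bounded (C := M')
        (Eventually.of_forall (by simpa [Real.norm_eq_abs] using hb))⟩
  -- iterated invariance
  have hmapm : ∀ m : ℕ, Measure.map Fbar^[m] ν = ν := by
    intro m
    induction m with
    | zero => simp
    | succ m ih =>
      rw [Function.iterate_succ, ← Measure.map_map (hFbar.iterate m) hFbar, hinv, ih]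
  set T : ℝ := ∫ y, disc π (ψ ∘ F^[k]) y * disc π (φ ∘ F^[k]) y ∂ν with hT
  -- key estimate
  have key : ∀ m : ℕ,
      |(∫ y, disc π ((fun x => ψ x * φ x) ∘ F^[k + m]) y ∂ν) - T| ≤ M * V := by
    intro m
    have hbψ1 : ∀ y, |disc π (ψ ∘ F^[k + m]) y| ≤ Mψ :=
      abs_disc_le π hπ _ Mψ (fun x => bddψ _)
    have hbψ2 : ∀ y, |disc π (ψ ∘ F^[k]) (Fbar^[m] y)| ≤ Mψ :=
      fun y => abs_disc_le π hπ _ Mψ (fun x => bddψ _) _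
    have hbφ : ∀ y, |disc π (φ ∘ F^[k + m]) y| ≤ M :=
      abs_disc_le π hπ _ M (fun x => bddφ _)
    have int1 : Integrable
        (fun y => disc π (ψ ∘ F^[k + m]) y * disc π (φ ∘ F^[k + m]) y) ν := by
      refine mkInt _ (Mψ * M) ((hmeas ψ hψ (k + m)).mul (hmeas φ hφ (k + m))) ?_
      intro y
      rw [abs_mul]
      exact mul_le_mul (hbψ1 y) (hbφ y) (abs_nonneg _) (le_trans (abs_nonneg _) (hbψ1 y))
    have int2 : Integrable
        (fun y => disc π (ψ ∘ F^[k]) (Fbar^[m] y) * disc π (φ ∘ F^[k + m]) y) ν := by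
      refine mkInt _ (Mψ * M) (((hmeas ψ hψ k).comp (hFbar.iterate m)).mul
        (hmeas φ hφ (k + m))) ?_
      intro y
      rw [abs_mul]
      exact mul_le_mul (hbψ2 y) (hbφ y) (abs_nonneg _) (le_trans (abs_nonneg _) (hbψ2 y))
    -- rewrite the first integral
    have e1 : (∫ y, disc π ((fun x => ψ x * φ x) ∘ F^[k + m]) y ∂ν)
        = ∫ y, disc π (ψ ∘ F^[k + m]) y * disc π (φ ∘ F^[k + m]) y ∂ν := by
      simp only [hprod]
    -- rewrite T via invariance
    have e2 : T = ∫ y, disc π (ψ ∘ F^[k]) (Fbar^[m] y) * disc π (φ ∘ F^[k + m]) y ∂ν := by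
      have hg : AEStronglyMeasurable
          (fun y => disc π (ψ ∘ F^[k]) y * disc π (φ ∘ F^[k]) y) (Measure.map Fbar^[m] ν) :=
        ((hmeas ψ hψ k).mul (hmeas φ hφ k)).aestronglyMeasurable
      rw [hT]
      calc (∫ y, disc π (ψ ∘ F^[k]) y * disc π (φ ∘ F^[k]) y ∂ν)
          = ∫ y, disc π (ψ ∘ F^[k]) y * disc π (φ ∘ F^[k]) y ∂(Measure.map Fbar^[m] ν) := by
            rw [hmapm m]
        _ = ∫ y, disc π (ψ ∘ F^[k]) (Fbar^[m] y) * disc π (φ ∘ F^[k]) (Fbar^[m] y) ∂ν :=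
            integral_map (hFbar.iterate m).aemeasurable hg
        _ = ∫ y, disc π (ψ ∘ F^[k]) (Fbar^[m] y) * disc π (φ ∘ F^[k + m]) y ∂ν := by
            simp only [hshift]
    rw [e1, e2, ← integral_sub int1 int2]
    have hb : ∀ y, |disc π (ψ ∘ F^[k + m]) y * disc π (φ ∘ F^[k + m]) y
        - disc π (ψ ∘ F^[k]) (Fbar^[m] y) * disc π (φ ∘ F^[k + m]) y| ≤ V * M := by
      intro y
      rw [← sub_mul, abs_mul]
      exact mul_le_mul (hvar m y) (hbφ y) (abs_nonneg _) hV0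
    calc |∫ y, (disc π (ψ ∘ F^[k + m]) y * disc π (φ ∘ F^[k + m]) y
          - disc π (ψ ∘ F^[k]) (Fbar^[m] y) * disc π (φ ∘ F^[k + m]) y) ∂ν|
        ≤ ∫ y, |disc π (ψ ∘ F^[k + m]) y * disc π (φ ∘ F^[k + m]) y
          - disc π (ψ ∘ F^[k]) (Fbar^[m] y) * disc π (φ ∘ F^[k + m]) y| ∂ν := by
          simpa [Real.norm_eq_abs] using
            norm_integral_le_integral_norm (μ := ν)
              (fun y => disc π (ψ ∘ F^[k + m]) y * disc π (φ ∘ F^[k + m]) y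
                - disc π (ψ ∘ F^[k]) (Fbar^[m] y) * disc π (φ ∘ F^[k + m]) y)
      _ ≤ ∫ _, V * M ∂ν := by
          refine integral_mono (int1.sub int2).abs (integrable_const _) ?_
          intro y
          exact hb y
      _ = V * M := by simp [measure_univ]
      _ = M * V := mul_comm V M
  -- pass to the limit
  have hTend := hlift (fun x => ψ x * φ x) (hψ.mul hφ)
  have hTend2 : Tendsto
      (fun m : ℕ => ∫ y, disc π ((fun x => ψ x * φ x) ∘ F^[m + k]) y ∂ν) atTop
      (nhds (∫ x, ψ x * φ x ∂νt)) := hTend.comp (tendsto_add_atTop_nat k)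
  have key' : ∀ m : ℕ,
      |(∫ y, disc π ((fun x => ψ x * φ x) ∘ F^[m + k]) y ∂ν) - T| ≤ M * V := by
    intro m
    rw [Nat.add_comm]
    exact key m
  have hTend3 : Tendsto
      (fun m : ℕ => |(∫ y, disc π ((fun x => ψ x * φ x) ∘ F^[m + k]) y ∂ν) - T|) atTop
      (nhds |(∫ x, ψ x * φ x ∂νt) - T|) := (hTend2.sub tendsto_const_nhds).abs
  exact le_of_tendsto hTend3 (Eventually.of_forall key')
end
end
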